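/- arXiv:0803.3198 — 3 statements merged into one kernel-verified Lean document; each statement's English description precedes it below -/
import Mathlib

section
/- For each fixed k, the Bessel polynomial coefficient α_k^(n) = ((-n)_k · 2^k)/((-2n)_k · k!) is monotonically increasing in n for n ≥ k, satisfies α_k^(n) ≤ 1/k!, and converges to 1/k! as n → ∞. -/
open MeasureTheory Filter Set

/-- Pochhammer symbol (rising factorial) evaluated at a real number. -/
noncomputable def poch (a : ℝ) (k : ℕ) : ℝ := (ascPochhammer ℝ k).eval a

/-- Coefficients `α_k^(n)` of the `n`-th Bessel polynomial. -/
noncomputable def besselCoeff (n k : ℕ) : ℝ :=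
  (poch (-(n : ℝ)) k * 2 ^ k) / (poch (-(2 * n : ℝ)) k * (Nat.factorial k))

/-- The `n`-th Bessel polynomial as a real function. -/
noncomputable def besselPoly (n : ℕ) (u : ℝ) : ℝ :=
  ∑ k ∈ Finset.range (n + 1), besselCoeff n k * u ^ k

/-!
The Pochhammer symbols at `-n` and `-2n` are, up to the common sign `(-1)^k`, the falling
products `∏_{j<k} (n - j)` and `∏_{j<k} (2n - j)`, so
`α_k^(n) = (1/k!) ∏_{j<k} (2n - 2j)/(2n - j)`. For `j < k ≤ n` each factor equals
`1 - j/(2n - j)`: it lies in `[0, 1]`, increases with `n` and tends to `1`.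
-/

open Finset Topology

lemma poch_neg (x : ℝ) (k : ℕ) : poch (-x) k = (-1) ^ k * ∏ j ∈ range k, (x - j) := by
  rw [poch, ascPochhammer_eval_neg_eq_descPochhammer, descPochhammer_eval_eq_prod_range]

noncomputable def besselFactor (n j : ℕ) : ℝ := (2 * n - 2 * j) / (2 * n - j)

lemma besselCoeff_eq_prod_besselFactor (n k : ℕ) :
    besselCoeff n k = (∏ j ∈ range k, besselFactor n j) / k.factorial := by
  have hnum : ∏ j ∈ range k, (2 * (n : ℝ) - 2 * j) = 2 ^ k * ∏ j ∈ range k, ((n : ℝ) - j) := by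
    rw [← card_range k, ← prod_const, card_range, ← prod_mul_distrib]
    exact prod_congr rfl fun j _ => by ring
  rw [besselCoeff, poch_neg, poch_neg, mul_assoc, mul_assoc, mul_div_mul_left _ _ (by simp)]
  simp only [besselFactor]
  rw [prod_div_distrib, hnum, div_div, mul_comm (2 ^ k : ℝ)]

lemma besselFactor_eq_one_sub {n j : ℕ} (h : j < 2 * n) :
    besselFactor n j = 1 - j / (2 * n - j) := by
  have : (2 * n - j : ℝ) ≠ 0 := by
    rw [sub_ne_zero]; exact_mod_cast h.ne'
  rw [besselFactor, eq_sub_iff_add_eq, ← add_div, div_eq_one_iff_eq this]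
  ring

lemma besselFactor_nonneg {n j : ℕ} (h : j ≤ n) : 0 ≤ besselFactor n j := by
  have : (j : ℝ) ≤ n := by exact_mod_cast h
  unfold besselFactor
  apply div_nonneg <;> linarith

lemma besselFactor_le_one {n j : ℕ} (h : j ≤ 2 * n) : besselFactor n j ≤ 1 := by
  have : (j : ℝ) ≤ 2 * n := by exact_mod_cast h
  exact div_le_one_of_le₀ (by linarith [j.cast_nonneg (α := ℝ)]) (by linarith)

lemma besselFactor_le_besselFactor {m n j : ℕ} (hj : j < 2 * m) (hmn : m ≤ n) :
    besselFactor m j ≤ besselFactor n j := by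
  have hj' : (j : ℝ) < 2 * m := by exact_mod_cast hj
  have hmn' : (m : ℝ) ≤ n := by exact_mod_cast hmn
  rw [besselFactor_eq_one_sub hj, besselFactor_eq_one_sub (by omega)]
  gcongr

lemma tendsto_besselFactor (j : ℕ) : Tendsto (besselFactor · j) atTop (𝓝 1) := by
  have hden : Tendsto (fun n : ℕ => 2 * (n : ℝ) - j) atTop atTop :=
    tendsto_atTop_add_const_right _ _ (tendsto_natCast_atTop_atTop.const_mul_atTop two_pos)
  have hlim := (tendsto_const_nhds (x := (j : ℝ))).div_atTop hden
  rw [← sub_zero (1 : ℝ)]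
  refine (tendsto_const_nhds.sub hlim).congr' ?_
  filter_upwards [eventually_gt_atTop j] with n hn
  rw [besselFactor_eq_one_sub (by omega)]

/-- For fixed `k`, the coefficient `α_k^(n)` is increasing in `n` for `n ≥ k`,
bounded by `1/k!`, and converges to `1/k!` as `n → ∞`. -/
theorem besselCoeff_monotone_le_tendsto (k : ℕ) :
    (∀ m n : ℕ, k ≤ m → m ≤ n → besselCoeff m k ≤ besselCoeff n k) ∧
    (∀ n : ℕ, k ≤ n → besselCoeff n k ≤ 1 / (Nat.factorial k : ℝ)) ∧
    Filter.Tendsto (fun n : ℕ => besselCoeff n k) Filter.atTop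
      (nhds (1 / (Nat.factorial k : ℝ))) := by
  simp only [besselCoeff_eq_prod_besselFactor]
  refine ⟨fun m n hkm hmn => ?_, fun n hkn => ?_, ?_⟩
  · gcongr with j hj
    · exact fun j hj => besselFactor_nonneg (by grind)
    · exact besselFactor_le_besselFactor (by grind) hmn
  · gcongr
    exact prod_le_one (fun j hj => besselFactor_nonneg (by grind))
      (fun j hj => besselFactor_le_one (by grind))
  · simpa using (tendsto_finsetProd (range k) fun j _ => tendsto_besselFactor j).div_const
      (k.factorial : ℝ)
end

section
/- For each natural number n, the monomial u^n has the expansion u^n = Σ_{j=0}^n δ_j^(n) q_j(u) in terms of Bessel polynomials, where δ_j^(n) = ((n+1)!/2^n) · ((-1)^{n-j} (2j)!)/((n-j)! j! (2j+1-n)!) when (n-1)/2 ≤ j ≤ n and δ_j^(n) = 0 when 0 ≤ j < (n-1)/2. -/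
open MeasureTheory Filter Set

/-- The `n`-th Bessel polynomial as a real polynomial. -/
noncomputable def besselP (n : ℕ) : Polynomial ℝ :=
  ∑ k ∈ Finset.range (n + 1), Polynomial.C (besselCoeff n k) * Polynomial.X ^ k

/-- Carlitz' coefficients `δ_j^(n)`. -/
noncomputable def carlitzCoeff (n j : ℕ) : ℝ :=
  if n ≤ 2 * j + 1 then
    ((Nat.factorial (n + 1) : ℝ) / 2 ^ n) *
      ((-1 : ℝ) ^ (n - j) * (Nat.factorial (2 * j) : ℝ)) /
        ((Nat.factorial (n - j) : ℝ) * (Nat.factorial j : ℝ) *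
          (Nat.factorial (2 * j + 1 - n) : ℝ))
  else 0

/-! Comparing coefficients of `X ^ k`, the claim is `∑ j, δ_j^(n) α_k^(j) = [k = n]`, where
`α_k^(j) = 0` for `j < k`. This leaves only `j = n` when `k = n`. For `k < n` and `m = n - k`,
the term at `j = k + t` is, up to a factor independent of `t`, `(-1)^(m-t) (m choose t) Q(k + t)`
with `Q(j) = (2j - k)! / (2j + 1 - n)!`, a polynomial of degree `m - 1` in `j`; the sum is
therefore the `m`-th forward difference of `Q`, which vanishes. -/

open Polynomial Finset Nat

lemma poch_neg_natCast (m k : ℕ) : poch (-(m : ℝ)) k = (-1) ^ k * m.descFactorial k := by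
  rw [poch, ascPochhammer_eval_neg_eq_descPochhammer, descPochhammer_eval_eq_descFactorial]

lemma besselCoeff_eq_descFactorial (j k : ℕ) :
    besselCoeff j k = j.descFactorial k * 2 ^ k / ((2 * j).descFactorial k * k !) := by
  rw [besselCoeff, show -(2 * (j : ℝ)) = -((2 * j : ℕ) : ℝ) by push_cast; ring,
    poch_neg_natCast, poch_neg_natCast, mul_assoc, mul_assoc]
  exact mul_div_mul_left _ _ (pow_ne_zero _ (by norm_num))

lemma besselCoeff_eq_zero_of_lt {j k : ℕ} (h : j < k) : besselCoeff j k = 0 := by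
  simp [besselCoeff_eq_descFactorial, Nat.descFactorial_eq_zero_iff_lt.mpr h]

lemma besselCoeff_eq_factorial {j k : ℕ} (h : k ≤ j) :
    besselCoeff j k = 2 ^ k * j ! * (2 * j - k)! / ((2 * j)! * k ! * (j - k)!) := by
  have h₁ : ((j - k)! : ℝ) * j.descFactorial k = j ! := by
    exact_mod_cast Nat.factorial_mul_descFactorial h
  have h₂ : ((2 * j - k)! : ℝ) * (2 * j).descFactorial k = (2 * j)! := by
    exact_mod_cast Nat.factorial_mul_descFactorial (by omega : k ≤ 2 * j)
  rw [besselCoeff_eq_descFactorial, ← h₁, ← h₂]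
  have : ((2 * j).descFactorial k : ℝ) ≠ 0 := by
    exact_mod_cast (Nat.descFactorial_pos.mpr (by omega)).ne'
  field_simp

lemma coeff_besselP (j k : ℕ) : (besselP j).coeff k = besselCoeff j k := by
  rw [besselP, finsetSum_coeff]
  simp only [coeff_C_mul_X_pow]
  rw [sum_ite_eq (range (j + 1)) k]
  split_ifs with h
  · rfl
  · exact (besselCoeff_eq_zero_of_lt (by simpa using h)).symm

/-- `Q(j) = (2j + 2 - n) (2j + 3 - n) ⋯ (2j - k)`, which is `(2j - k)! / (2j + 1 - n)!` when
`n ≤ 2j + 1` and vanishes for `k ≤ j` with `2j + 1 < n`, matching the cut-off in `δ_j^(n)`. -/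
noncomputable def carlitzPoly (n k : ℕ) : ℝ[X] :=
  (ascPochhammer ℝ (n - k - 1)).comp (C 2 * X + C (2 - n : ℝ))

lemma natDegree_carlitzPoly_lt {n k : ℕ} (h : k < n) : (carlitzPoly n k).natDegree < n - k := by
  refine (natDegree_comp_le).trans_lt ?_
  rw [ascPochhammer_natDegree]
  have := Nat.mul_le_mul_left (n - k - 1) (natDegree_linear_le (a := (2 : ℝ)) (b := 2 - n))
  omega

lemma factorial_mul_eval_carlitzPoly {n k j : ℕ} (hk : k < n) (hkj : k ≤ j)
    (hj : n ≤ 2 * j + 1) :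
    ((2 * j + 1 - n)! : ℝ) * (carlitzPoly n k).eval (j : ℝ) = (2 * j - k)! := by
  have harg : 2 * (j : ℝ) + (2 - n) = ((2 * j + 1 - n + 1 : ℕ) : ℝ) := by
    push_cast [Nat.cast_sub hj]; ring
  rw [carlitzPoly, eval_comp]
  simp only [eval_add, eval_mul, eval_C, eval_X]
  rw [harg, ascPochhammer_nat_eq_natCast_ascFactorial, ← Nat.cast_mul,
    Nat.factorial_mul_ascFactorial, show 2 * j + 1 - n + (n - k - 1) = 2 * j - k by omega]

lemma eval_carlitzPoly_eq_zero {n k j : ℕ} (hkj : k ≤ j) (hj : 2 * j + 1 < n) :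
    (carlitzPoly n k).eval (j : ℝ) = 0 := by
  have harg : 2 * (j : ℝ) + (2 - n) = -((n - (2 * j + 2) : ℕ) : ℝ) := by
    push_cast [Nat.cast_sub hj]; ring
  rw [carlitzPoly, eval_comp]
  simp only [eval_add, eval_mul, eval_C, eval_X]
  rw [harg, ascPochhammer_eval_neg_coe_nat_of_lt (by omega)]

lemma carlitzCoeff_mul_besselCoeff {n k j : ℕ} (hk : k < n) (hkj : k ≤ j) (hjn : j ≤ n) :
    carlitzCoeff n j * besselCoeff j k =
      (n + 1)! / (2 ^ (n - k) * k ! * (n - k)!) *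
        ((-1) ^ (n - j) * (n - k).choose (j - k) * (carlitzPoly n k).eval (j : ℝ)) := by
  by_cases hj : n ≤ 2 * j + 1
  · have heval : (carlitzPoly n k).eval (j : ℝ) = (2 * j - k)! / (2 * j + 1 - n)! := by
      rw [eq_div_iff (by positivity), mul_comm, factorial_mul_eval_carlitzPoly hk hkj hj]
    have hchoose : ((n - k).choose (j - k) : ℝ) = (n - k)! / ((j - k)! * (n - j)!) := by
      have := Nat.choose_mul_factorial_mul_factorial (by omega : j - k ≤ n - k)
      rw [show n - k - (j - k) = n - j by omega] at this
      rw [eq_div_iff (by positivity), ← mul_assoc]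
      exact_mod_cast this
    have hpow : (2 : ℝ) ^ n = 2 ^ (n - k) * 2 ^ k := by
      rw [← pow_add, Nat.sub_add_cancel hk.le]
    rw [carlitzCoeff, if_pos hj, besselCoeff_eq_factorial hkj, heval, hchoose, hpow]
    field_simp
  · rw [carlitzCoeff, if_neg hj, eval_carlitzPoly_eq_zero hkj (by omega)]
    simp

lemma sum_carlitzCoeff_mul_besselCoeff_of_lt {n k : ℕ} (hk : k < n) :
    ∑ j ∈ range (n + 1), carlitzCoeff n j * besselCoeff j k = 0 := by
  set m := n - k with hm
  have hterms : ∀ t ∈ range (m + 1), carlitzCoeff n (k + t) * besselCoeff (k + t) k =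
      (n + 1)! / (2 ^ m * k ! * m !) *
        (((-1 : ℤ) ^ (m - t) * m.choose t) • (carlitzPoly n k).eval ((k : ℝ) + t • 1)) := by
    intro t ht
    have htm : t ≤ m := Nat.lt_succ_iff.mp (mem_range.mp ht)
    rw [carlitzCoeff_mul_besselCoeff hk (by omega) (by omega), zsmul_eq_mul, nsmul_one,
      show n - (k + t) = m - t by omega, Nat.add_sub_cancel_left, ← hm]
    push_cast
    ring
  have hsplit : range (n + 1) = range (k + (m + 1)) := by congr 1; omega
  rw [hsplit, sum_range_add, sum_eq_zero fun j hj ↦ by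
      rw [besselCoeff_eq_zero_of_lt (mem_range.mp hj), mul_zero],
    zero_add, sum_congr rfl hterms, ← mul_sum,
    ← fwdDiff_iter_eq_sum_shift (f := (carlitzPoly n k).eval),
    fwdDiff_iter_eq_zero_of_degree_lt (natDegree_carlitzPoly_lt hk), Pi.zero_apply, mul_zero]

lemma carlitzCoeff_self_mul_besselCoeff_self (n : ℕ) :
    carlitzCoeff n n * besselCoeff n n = 1 := by
  rw [carlitzCoeff, if_pos (by omega), besselCoeff_eq_factorial le_rfl, Nat.sub_self,
    Nat.factorial_zero, Nat.cast_one, show 2 * n + 1 - n = n + 1 by omega,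
    show 2 * n - n = n by omega]
  field_simp

lemma sum_carlitzCoeff_mul_besselCoeff (n k : ℕ) :
    ∑ j ∈ range (n + 1), carlitzCoeff n j * besselCoeff j k = if k = n then 1 else 0 := by
  rcases lt_trichotomy k n with hk | rfl | hk
  · rw [if_neg hk.ne, sum_carlitzCoeff_mul_besselCoeff_of_lt hk]
  · rw [if_pos rfl, sum_range_succ, sum_eq_zero fun j hj ↦ by
      rw [besselCoeff_eq_zero_of_lt (mem_range.mp hj), mul_zero],
      zero_add, carlitzCoeff_self_mul_besselCoeff_self]
  · rw [if_neg hk.ne', sum_eq_zero fun j hj ↦ by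
      rw [besselCoeff_eq_zero_of_lt (by have := mem_range.mp hj; omega), mul_zero]]

/-- Carlitz' inversion formula: `u^n = Σ_{j=0}^n δ_j^(n) q_j(u)` as polynomials. -/
theorem carlitz_inversion (n : ℕ) :
    (Polynomial.X : Polynomial ℝ) ^ n =
      ∑ j ∈ Finset.range (n + 1), Polynomial.C (carlitzCoeff n j) * besselP j := by
  ext k
  simp only [coeff_X_pow, finsetSum_coeff, coeff_C_mul, coeff_besselP,
    sum_carlitzCoeff_mul_besselCoeff]
end

section
/- Let h: (0,∞) → [0,∞) be measurable with h(t) ~ K t^{-ν-1} as t → ∞ for some K > 0, ν > 0, and such that ∫_0^{t₀} t^{-d/2} h(t) dt < ∞ for all t₀ > 0. Then the subordinated function F(x) = ∫_0^∞ (4πt)^{-d/2} exp(-|x|²/(4t)) h(t) dt on ℝ^d satisfies F(x) ~ K · (2^{2ν}/π^{d/2}) Γ(ν + d/2) |x|^{-2ν-d} as |x| → ∞. -/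
open MeasureTheory Filter Set

/-!
For `g(t) = K t^{-ν-1}` the subordinated integral is an inverse-Gamma integral and equals the
claimed profile `K (2^{2ν}/π^{d/2}) Γ(ν+d/2) r^{-2ν-d}` exactly. As `r = |x| → ∞` the heat kernel
moves its mass to large `t`: on `(0, T]` it is at most `e^{-(r²-1)/(4T)}` times the kernel at
`r = 1`, which is negligible against `r^{-2ν-d}`. Hence the integrals against `h` and against `g`
differ only by `o(r^{-2ν-d})` plus the tail `t > T`, where `h/g` is as close to `1` as we like.
-/

open Real Asymptotics

section AbelianLemma

variable {μ : Measure ℝ} {f g : ℝ → ℝ}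

lemma norm_setIntegral_Ioi_mul_sub_mul_le {w : ℝ → ℝ} {T c : ℝ} (hc : 0 ≤ c)
    (hw : 0 ≤ᵐ[μ] w) (hg : 0 ≤ᵐ[μ] g) (hgi : Integrable (fun t => w t * g t) μ)
    (hfg : ∀ t ≥ T, ‖f t - g t‖ ≤ c * ‖g t‖) :
    ‖∫ t in Ioi T, (w t * f t - w t * g t) ∂μ‖ ≤ c * ∫ t, w t * g t ∂μ := by
  have hwg : 0 ≤ᵐ[μ] fun t => w t * g t := by
    filter_upwards [hw, hg] with t hwt hgt using mul_nonneg hwt hgt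
  calc ‖∫ t in Ioi T, (w t * f t - w t * g t) ∂μ‖
      ≤ ∫ t in Ioi T, c * (w t * g t) ∂μ := by
        refine norm_integral_le_of_norm_le (hgi.integrableOn.const_mul _) ?_
        filter_upwards [ae_restrict_mem measurableSet_Ioi, ae_restrict_of_ae hw,
          ae_restrict_of_ae hg] with t ht hwt hgt
        rw [← mul_sub, norm_mul, Real.norm_of_nonneg hwt, mul_left_comm]
        exact mul_le_mul_of_nonneg_left
          ((hfg t ht.le).trans_eq (by rw [Real.norm_of_nonneg hgt])) hwt
    _ = c * ∫ t in Ioi T, w t * g t ∂μ := integral_const_mul _ _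
    _ ≤ c * ∫ t, w t * g t ∂μ := by grw [setIntegral_le_integral hgi hwg]

theorem isEquivalent_integral_mul_of_isEquivalent_atTop {ι : Type*} {l : Filter ι}
    {w : ι → ℝ → ℝ} (hfg : f ~[atTop] g) (hw : ∀ i, 0 ≤ᵐ[μ] w i) (hg : 0 ≤ᵐ[μ] g)
    (hf_int : ∀ᶠ i in l, Integrable (fun t => w i t * f t) μ)
    (hg_int : ∀ᶠ i in l, Integrable (fun t => w i t * g t) μ)
    (hf_head : ∀ᶠ T in atTop,
      (fun i => ∫ t in Iic T, w i t * f t ∂μ) =o[l] fun i => ∫ t, w i t * g t ∂μ)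
    (hg_head : ∀ᶠ T in atTop,
      (fun i => ∫ t in Iic T, w i t * g t ∂μ) =o[l] fun i => ∫ t, w i t * g t ∂μ) :
    (fun i => ∫ t, w i t * f t ∂μ) ~[l] fun i => ∫ t, w i t * g t ∂μ := by
  refine IsLittleO.of_bound fun c hc => ?_
  obtain ⟨T, hT_tail, hT_f, hT_g⟩ :=
    ((eventually_forall_ge_atTop.2 (hfg.isLittleO.bound (half_pos hc))).and
      (hf_head.and hg_head)).exists
  have hc4 : 0 < c / 4 := by positivity
  filter_upwards [hf_int, hg_int, hT_f.bound hc4, hT_g.bound hc4] with i hfi hgi hf_small hg_small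
  have hI : 0 ≤ ∫ t, w i t * g t ∂μ := integral_nonneg_of_ae <| by
    filter_upwards [hw i, hg] with t hwt hgt using mul_nonneg hwt hgt
  have htail := norm_setIntegral_Ioi_mul_sub_mul_le (half_pos hc).le (hw i) hg hgi hT_tail
  have hsplit : (∫ t, w i t * f t ∂μ) - ∫ t, w i t * g t ∂μ =
      ((∫ t in Iic T, w i t * f t ∂μ) - ∫ t in Iic T, w i t * g t ∂μ) +
        ∫ t in Ioi T, (w i t * f t - w i t * g t) ∂μ := by
    rw [← integral_sub hfi hgi,
      ← integral_add_compl measurableSet_Iic (f := fun t => w i t * f t - w i t * g t)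
        (hfi.sub hgi),
      compl_Iic, integral_sub hfi.integrableOn hgi.integrableOn]
  rw [Real.norm_of_nonneg hI] at hf_small hg_small ⊢
  rw [Pi.sub_apply, hsplit]
  grw [norm_add_le, norm_sub_le, hf_small, hg_small, htail]
  linarith

end AbelianLemma

section InverseGammaIntegral

variable {p a : ℝ}

-- The integrand produced by `integral_comp_rpow_Ioi` for the substitution `t = x⁻¹`.
lemma abs_neg_one_mul_rpow_smul_comp_rpow_neg_one {x : ℝ} (hx : 0 < x) :
    (|(-1 : ℝ)| * x ^ ((-1 : ℝ) - 1)) •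
        ((x ^ (-1 : ℝ)) ^ (-p - 1) * exp (-(a / x ^ (-1 : ℝ)))) =
      x ^ (p - 1) * exp (-(a * x)) := by
  have hpow : x ^ ((-1 : ℝ) - 1) * (x ^ (-1 : ℝ)) ^ (-p - 1) = x ^ (p - 1) := by
    rw [← rpow_mul hx.le, ← rpow_add hx]
    ring_nf
  rw [abs_neg, abs_one, one_mul, smul_eq_mul, ← mul_assoc, hpow, rpow_neg_one, div_inv_eq_mul]

lemma integrableOn_rpow_neg_sub_one_mul_exp_neg_div (hp : 0 < p) (ha : 0 < a) :
    IntegrableOn (fun t : ℝ => t ^ (-p - 1) * exp (-(a / t))) (Ioi 0) := by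
  rw [← integrableOn_Ioi_comp_rpow_iff _ (by norm_num : (-1 : ℝ) ≠ 0)]
  refine IntegrableOn.congr_fun ?_
    (fun x hx => (abs_neg_one_mul_rpow_smul_comp_rpow_neg_one hx).symm) measurableSet_Ioi
  simpa only [rpow_one, neg_mul] using
    integrableOn_rpow_mul_exp_neg_mul_rpow (by linarith : (-1 : ℝ) < p - 1) one_pos ha

lemma integral_rpow_neg_sub_one_mul_exp_neg_div (hp : 0 < p) (ha : 0 < a) :
    ∫ t in Ioi 0, t ^ (-p - 1) * exp (-(a / t)) = Gamma p / a ^ p := by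
  rw [← integral_comp_rpow_Ioi _ (by norm_num : (-1 : ℝ) ≠ 0),
    setIntegral_congr_fun measurableSet_Ioi
      (fun x hx => abs_neg_one_mul_rpow_smul_comp_rpow_neg_one hx),
    integral_rpow_mul_exp_neg_mul_Ioi hp ha, one_div, inv_rpow ha.le, inv_mul_eq_div]

end InverseGammaIntegral

noncomputable def heatKernel (d r t : ℝ) : ℝ := (4 * π * t) ^ (-d / 2) * exp (-r ^ 2 / (4 * t))

lemma measurable_heatKernel (d r : ℝ) : Measurable (heatKernel d r) := by
  unfold heatKernel
  fun_prop

section HeatKernel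

variable {d r t : ℝ}

lemma heatKernel_nonneg (ht : 0 ≤ t) : 0 ≤ heatKernel d r t := by
  unfold heatKernel; positivity

lemma heatKernel_le_rpow (ht : 0 < t) :
    heatKernel d r t ≤ (4 * π) ^ (-d / 2) * t ^ (-d / 2) := by
  rw [heatKernel, ← mul_rpow (by positivity) ht.le]
  refine mul_le_of_le_one_right (by positivity) (exp_le_one_iff.2 ?_)
  rw [neg_div]
  exact neg_nonpos.2 (by positivity)

lemma heatKernel_le_exp_mul_heatKernel_one {T : ℝ} (hr : 1 ≤ r) (ht : 0 < t) (htT : t ≤ T) :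
    heatKernel d r t ≤ exp (-(r ^ 2 - 1) / (4 * T)) * heatKernel d 1 t := by
  have hsplit : heatKernel d r t = exp (-(r ^ 2 - 1) / (4 * t)) * heatKernel d 1 t := by
    rw [heatKernel, heatKernel, mul_left_comm, ← exp_add]
    ring_nf
  have hexp : -(r ^ 2 - 1) / (4 * t) ≤ -(r ^ 2 - 1) / (4 * T) := by
    rw [neg_div, neg_div, neg_le_neg_iff]
    exact div_le_div_of_nonneg_left (by nlinarith) (by positivity) (by linarith)
  rw [hsplit]
  exact mul_le_mul_of_nonneg_right (exp_le_exp.2 hexp) (heatKernel_nonneg ht.le)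

lemma heatKernel_mul_rpow (ν : ℝ) (ht : 0 < t) :
    heatKernel d r t * t ^ (-ν - 1) =
      (4 * π) ^ (-d / 2) * (t ^ (-(ν + d / 2) - 1) * exp (-(r ^ 2 / 4 / t))) := by
  have hpow : t ^ (-d / 2) * t ^ (-ν - 1) = t ^ (-(ν + d / 2) - 1) := by
    rw [← rpow_add ht]
    ring_nf
  rw [heatKernel, mul_rpow (by positivity) ht.le, neg_div (4 * t), div_div, ← hpow]
  ring

variable {ν : ℝ}

lemma integrableOn_heatKernel_mul_rpow (hp : 0 < ν + d / 2) (hr : 0 < r) :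
    IntegrableOn (fun t => heatKernel d r t * t ^ (-ν - 1)) (Ioi 0) :=
  IntegrableOn.congr_fun
    ((integrableOn_rpow_neg_sub_one_mul_exp_neg_div hp (by positivity : 0 < r ^ 2 / 4)).const_mul
      _)
    (fun _ ht => (heatKernel_mul_rpow ν ht).symm) measurableSet_Ioi

lemma integral_heatKernel_mul_rpow (hp : 0 < ν + d / 2) (hr : 0 < r) :
    ∫ t in Ioi 0, heatKernel d r t * t ^ (-ν - 1) =
      2 ^ (2 * ν) / π ^ (d / 2) * Gamma (ν + d / 2) * r ^ (-2 * ν - d) := by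
  rw [setIntegral_congr_fun measurableSet_Ioi (fun _ ht => heatKernel_mul_rpow ν ht),
    integral_const_mul, integral_rpow_neg_sub_one_mul_exp_neg_div hp (by positivity)]
  have four_rpow (x : ℝ) : (4 : ℝ) ^ x = 2 ^ (2 * x) := by
    rw [show (4 : ℝ) = 2 ^ (2 : ℝ) by norm_num, ← rpow_mul zero_le_two]
  have hkernel : (4 * π) ^ (-d / 2) = (2 ^ d * π ^ (d / 2))⁻¹ := by
    rw [neg_div, rpow_neg (by positivity), mul_rpow zero_le_four pi_pos.le, four_rpow]
    ring_nf
  have hscale : (r ^ 2 / 4) ^ (ν + d / 2) = r ^ (2 * ν + d) / (2 ^ (2 * ν) * 2 ^ d) := by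
    rw [div_rpow (by positivity) zero_le_four, ← rpow_natCast_mul hr.le, four_rpow,
      ← rpow_add zero_lt_two]
    push_cast
    ring_nf
  have hdecay : r ^ (-2 * ν - d) = (r ^ (2 * ν + d))⁻¹ := by
    rw [← rpow_neg hr.le]
    ring_nf
  rw [hkernel, hscale, hdecay]
  field_simp

end HeatKernel

section Subordination

variable {d ν T : ℝ} {φ : ℝ → ℝ}

lemma integrableOn_Ioc_heatKernel_mul (hφ : Measurable φ)
    (hint : IntegrableOn (fun t => t ^ (-d / 2) * φ t) (Ioc 0 T)) (r : ℝ) :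
    IntegrableOn (fun t => heatKernel d r t * φ t) (Ioc 0 T) := by
  refine Integrable.mono' (hint.norm.const_mul ((4 * π) ^ (-d / 2)))
    ((measurable_heatKernel d r).mul hφ).aestronglyMeasurable ?_
  filter_upwards [ae_restrict_mem measurableSet_Ioc] with t ht
  rw [norm_mul, norm_mul, Real.norm_of_nonneg (heatKernel_nonneg ht.1.le),
    Real.norm_of_nonneg (rpow_nonneg ht.1.le _), ← mul_assoc]
  exact mul_le_mul_of_nonneg_right (heatKernel_le_rpow ht.1) (norm_nonneg _)

lemma integrableOn_heatKernel_mul (hφ : Measurable φ)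
    (hint : ∀ T > 0, IntegrableOn (fun t => t ^ (-d / 2) * φ t) (Ioc 0 T))
    (hdecay : φ =O[atTop] fun t => t ^ (-ν - 1)) (hp : 0 < ν + d / 2) {r : ℝ} (hr : 0 < r) :
    IntegrableOn (fun t => heatKernel d r t * φ t) (Ioi 0) := by
  obtain ⟨C, hC⟩ := hdecay.bound
  obtain ⟨T, hT⟩ := eventually_atTop.1 (hC.and (eventually_gt_atTop 0))
  have hT0 : 0 < T := (hT T le_rfl).2
  rw [← Ioc_union_Ioi_eq_Ioi hT0.le]
  refine (integrableOn_Ioc_heatKernel_mul hφ (hint T hT0) r).union <| Integrable.mono'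
    (((integrableOn_heatKernel_mul_rpow hp hr).mono_set (Ioi_subset_Ioi hT0.le)).const_mul C)
    ((measurable_heatKernel d r).mul hφ).aestronglyMeasurable ?_
  filter_upwards [ae_restrict_mem measurableSet_Ioi] with t ht
  have ht0 : 0 < t := hT0.trans ht
  rw [norm_mul, Real.norm_of_nonneg (heatKernel_nonneg ht0.le), mul_left_comm C]
  refine mul_le_mul_of_nonneg_left ?_ (heatKernel_nonneg ht0.le)
  simpa only [Real.norm_of_nonneg (rpow_nonneg ht0.le _)] using (hT t ht.le).1

lemma isBigO_setIntegral_Ioc_heatKernel_mul (hφ : ∀ t ∈ Ioc 0 T, 0 ≤ φ t)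
    (hint : IntegrableOn (fun t => heatKernel d 1 t * φ t) (Ioc 0 T)) :
    (fun r => ∫ t in Ioc 0 T, heatKernel d r t * φ t) =O[atTop]
      fun r => exp (-(4 * T)⁻¹ * r ^ 2) := by
  refine IsBigO.of_bound (exp (4 * T)⁻¹ * ∫ t in Ioc 0 T, heatKernel d 1 t * φ t) ?_
  filter_upwards [eventually_ge_atTop 1] with r hr
  have hnn : ∀ t ∈ Ioc 0 T, 0 ≤ heatKernel d r t * φ t :=
    fun t ht => mul_nonneg (heatKernel_nonneg ht.1.le) (hφ t ht)
  rw [Real.norm_of_nonneg (setIntegral_nonneg measurableSet_Ioc hnn),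
    Real.norm_of_nonneg (exp_pos _).le]
  calc ∫ t in Ioc 0 T, heatKernel d r t * φ t
      ≤ ∫ t in Ioc 0 T, exp (-(r ^ 2 - 1) / (4 * T)) * (heatKernel d 1 t * φ t) := by
        refine integral_mono_of_nonneg ?_ (hint.const_mul _) ?_ <;>
          filter_upwards [ae_restrict_mem measurableSet_Ioc] with t ht
        · exact hnn t ht
        · rw [← mul_assoc]
          exact mul_le_mul_of_nonneg_right
            (heatKernel_le_exp_mul_heatKernel_one hr ht.1 ht.2) (hφ t ht)
    _ = _ := by
        rw [integral_const_mul, mul_right_comm, ← exp_add]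
        ring_nf

lemma isLittleO_exp_neg_mul_sq_rpow_atTop {a : ℝ} (ha : 0 < a) (s : ℝ) :
    (fun r : ℝ => exp (-a * r ^ 2)) =o[atTop] fun r => r ^ s := by
  refine ((isLittleO_exp_neg_mul_rpow_atTop ha (s / 2)).comp_tendsto
    (tendsto_pow_atTop two_ne_zero)).congr' EventuallyEq.rfl ?_
  filter_upwards [eventually_ge_atTop 0] with r hr
  rw [Function.comp_apply, ← rpow_natCast_mul hr]
  ring_nf

lemma isLittleO_setIntegral_Iic_heatKernel_mul (hT : 0 < T) (hφ : ∀ t ∈ Ioc 0 T, 0 ≤ φ t)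
    (hint : IntegrableOn (fun t => heatKernel d 1 t * φ t) (Ioc 0 T)) (s : ℝ) :
    (fun r => ∫ t in Iic T, heatKernel d r t * φ t ∂volume.restrict (Ioi 0)) =o[atTop]
      fun r => r ^ s := by
  simp only [Measure.restrict_restrict measurableSet_Iic, inter_comm (Iic T), Ioi_inter_Iic]
  exact (isBigO_setIntegral_Ioc_heatKernel_mul hφ hint).trans_isLittleO
    (isLittleO_exp_neg_mul_sq_rpow_atTop (by positivity) s)

lemma integral_heatKernel_mul_const_mul_rpow (K : ℝ) (hp : 0 < ν + d / 2) {r : ℝ}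
    (hr : 0 < r) :
    ∫ t in Ioi 0, heatKernel d r t * (K * t ^ (-ν - 1)) =
      K * (2 ^ (2 * ν) / π ^ (d / 2)) * Gamma (ν + d / 2) * r ^ (-2 * ν - d) := by
  simp only [mul_left_comm _ K, integral_const_mul, integral_heatKernel_mul_rpow hp hr]
  ring

theorem isEquivalent_integral_heatKernel_mul {K : ℝ} (hK : 0 < K) (hp : 0 < ν + d / 2)
    (hφ : Measurable φ) (hφ_nonneg : ∀ t > 0, 0 ≤ φ t)
    (hint : ∀ T > 0, IntegrableOn (fun t => t ^ (-d / 2) * φ t) (Ioc 0 T))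
    (hφg : φ ~[atTop] fun t => K * t ^ (-ν - 1)) :
    (fun r => ∫ t in Ioi 0, heatKernel d r t * φ t) ~[atTop]
      fun r => K * (2 ^ (2 * ν) / π ^ (d / 2)) * Gamma (ν + d / 2) * r ^ (-2 * ν - d) := by
  have hC : 0 < K * (2 ^ (2 * ν) / π ^ (d / 2)) * Gamma (ν + d / 2) := by
    have := Gamma_pos_of_pos hp
    positivity
  have hg_int {r : ℝ} (hr : 0 < r) :
      IntegrableOn (fun t => heatKernel d r t * (K * t ^ (-ν - 1))) (Ioi 0) :=
    IntegrableOn.congr_fun ((integrableOn_heatKernel_mul_rpow hp hr).const_mul K)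
      (fun t _ => mul_left_comm _ _ _) measurableSet_Ioi
  have hD : (fun r => ∫ t in Ioi 0, heatKernel d r t * (K * t ^ (-ν - 1))) =ᶠ[atTop]
      fun r => K * (2 ^ (2 * ν) / π ^ (d / 2)) * Gamma (ν + d / 2) * r ^ (-2 * ν - d) :=
    (eventually_gt_atTop 0).mono fun r hr => integral_heatKernel_mul_const_mul_rpow K hp hr
  have hhead (ψ : ℝ → ℝ) (hψ : ∀ t > 0, 0 ≤ ψ t)
      (hψ_int : ∀ T > 0, IntegrableOn (fun t => heatKernel d 1 t * ψ t) (Ioc 0 T)) :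
      ∀ᶠ T in atTop, (fun r => ∫ t in Iic T, heatKernel d r t * ψ t ∂volume.restrict (Ioi 0))
        =o[atTop] fun r => ∫ t in Ioi 0, heatKernel d r t * (K * t ^ (-ν - 1)) := by
    filter_upwards [eventually_gt_atTop 0] with T hT
    exact ((isLittleO_setIntegral_Iic_heatKernel_mul hT (fun t ht => hψ t ht.1) (hψ_int T hT)
      _).trans_isBigO (isBigO_self_const_mul hC.ne' _ _)).trans_eventuallyEq hD.symm
  refine (isEquivalent_integral_mul_of_isEquivalent_atTop (μ := volume.restrict (Ioi 0))
    (w := fun r => heatKernel d r) hφg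
    (fun r => ae_restrict_of_forall_mem measurableSet_Ioi fun t ht => heatKernel_nonneg ht.le)
    (ae_restrict_of_forall_mem measurableSet_Ioi fun t (ht : 0 < t) => by positivity)
    ((eventually_gt_atTop 0).mono fun r hr => integrableOn_heatKernel_mul hφ hint
      (hφg.isBigO.trans (isBigO_const_mul_self K _ _)) hp hr)
    ((eventually_gt_atTop 0).mono fun r hr => hg_int hr)
    (hhead φ hφ_nonneg fun T hT => integrableOn_Ioc_heatKernel_mul hφ (hint T hT) 1)
    (hhead _ (fun t (ht : 0 < t) => by positivity)
      fun T _ => (hg_int one_pos).mono_set Ioc_subset_Ioi_self)).congr_right hD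

end Subordination

theorem subordinated_asymptotics_general (d : ℕ) (h : ℝ → ℝ) (K ν : ℝ)
    (hK : 0 < K) (hν : 0 < ν) (hmeas : Measurable h) (hnn : ∀ t : ℝ, 0 < t → 0 ≤ h t)
    (hasymp : Filter.Tendsto (fun t : ℝ => h t / (K * t ^ (-ν - 1)))
      Filter.atTop (nhds 1))
    (hint : ∀ t₀ : ℝ, 0 < t₀ →
      MeasureTheory.IntegrableOn (fun t : ℝ => t ^ (-(d : ℝ) / 2) * h t) (Set.Ioc 0 t₀)) :
    Filter.Tendsto
      (fun x : EuclideanSpace ℝ (Fin d) =>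
        (∫ t in Set.Ioi (0 : ℝ),
            (4 * Real.pi * t) ^ (-(d : ℝ) / 2) * Real.exp (-‖x‖ ^ 2 / (4 * t)) * h t) /
          (K * (2 ^ (2 * ν) / Real.pi ^ ((d : ℝ) / 2)) * Real.Gamma (ν + d / 2) *
            ‖x‖ ^ (-2 * ν - d)))
      (Filter.comap norm Filter.atTop) (nhds 1) := by
  have hp : 0 < ν + (d : ℝ) / 2 := by positivity
  have hequiv := isEquivalent_integral_heatKernel_mul hK hp hmeas hnn hint
    (isEquivalent_of_tendsto_one hasymp)
  refine ((isEquivalent_iff_tendsto_one ?_).1 hequiv).comp tendsto_comap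
  filter_upwards [eventually_gt_atTop 0] with r hr
  have := Gamma_pos_of_pos hp
  positivity

/-- Asymptotics of the Gaussian-subordinated function: if `h(t) ~ K t^{-ν-1}` at
infinity and `t^{-d/2} h(t)` is integrable near `0`, then
`F(x) = ∫_0^∞ (4πt)^{-d/2} e^{-|x|²/(4t)} h(t) dt ~ K (2^{2ν}/π^{d/2}) Γ(ν+d/2) |x|^{-2ν-d}`. -/
theorem subordinated_asymptotics (d : ℕ) (hd : 1 ≤ d) (h : ℝ → ℝ) (K ν : ℝ)
    (hK : 0 < K) (hν : 0 < ν) (hmeas : Measurable h) (hnn : ∀ t : ℝ, 0 < t → 0 ≤ h t)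
    (hasymp : Filter.Tendsto (fun t : ℝ => h t / (K * t ^ (-ν - 1)))
      Filter.atTop (nhds 1))
    (hint : ∀ t₀ : ℝ, 0 < t₀ →
      MeasureTheory.IntegrableOn (fun t : ℝ => t ^ (-(d : ℝ) / 2) * h t) (Set.Ioc 0 t₀)) :
    Filter.Tendsto
      (fun x : EuclideanSpace ℝ (Fin d) =>
        (∫ t in Set.Ioi (0 : ℝ),
            (4 * Real.pi * t) ^ (-(d : ℝ) / 2) * Real.exp (-‖x‖ ^ 2 / (4 * t)) * h t) /
          (K * (2 ^ (2 * ν) / Real.pi ^ ((d : ℝ) / 2)) * Real.Gamma (ν + d / 2) *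
            ‖x‖ ^ (-2 * ν - d)))
      (Filter.comap norm Filter.atTop) (nhds 1) :=
  subordinated_asymptotics_general d h K ν hK hν hmeas hnn hasymp hint
end
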